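/- arXiv:2405.17172 — 3 statements merged into one kernel-verified Lean document; each statement's English description precedes it below -/
import Mathlib

section
/- Let A be a set of n points in the plane in general position. If the complete geometric graph induced by A contains p pairwise crossing edges (p ≥ 1), then its edge set can be partitioned into n − p plane subgraphs. -/
noncomputable section

/-- Points live in the Euclidean plane. -/
abbrev Pt := EuclideanSpace ℝ (Fin 2)

/-- A set of points is in general position if no three of its points are collinear. -/
def GenPos (A : Set Pt) : Prop :=
  ∀ p ∈ A, ∀ q ∈ A, ∀ r ∈ A, p ≠ q → p ≠ r → q ≠ r → ¬ Collinear ℝ ({p, q, r} : Set Pt)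

/-- The edge set of the complete geometric graph induced by `A`: all unordered pairs
of distinct points of `A`. -/
def edges (A : Set Pt) : Set (Sym2 Pt) :=
  {e | ∃ a ∈ A, ∃ b ∈ A, a ≠ b ∧ e = s(a, b)}

/-- Two edges cross if they share no endpoint and their relative interiors
(open segments) have a common point. -/
def Cross (e f : Sym2 Pt) : Prop :=
  ∃ a b c d : Pt, e = s(a, b) ∧ f = s(c, d) ∧
    a ≠ c ∧ a ≠ d ∧ b ≠ c ∧ b ≠ d ∧
    (openSegment ℝ a b ∩ openSegment ℝ c d).Nonempty

/-- A set of edges is plane if no two of its edges cross. -/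
def PlaneEdges (E : Set (Sym2 Pt)) : Prop := ∀ e ∈ E, ∀ f ∈ E, ¬ Cross e f

/-- `F` is a partition of the edge set of the complete geometric graph induced by `A`
into `m` (possibly empty) classes. -/
def IsPartitionInto (A : Set Pt) (m : ℕ) (F : Fin m → Set (Sym2 Pt)) : Prop :=
  (⋃ i, F i) = edges A ∧ Pairwise (Function.onFun Disjoint F)

/-!
The double star of a segment `ab`, consisting of `ab`, the edges from `a` to the points right of
the line `ab` and the edges from `b` to the points left of it, is plane: an edge at `a` and an
edge at `b` run into opposite open half-planes of `ab`. If `ab` and `cd` cross, `c` lies right of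
`ab` exactly when `a` lies left of `cd` (both signs are nonzero by general position), so `ac`
lies in the double star of `ab` or in that of `cd`, and by symmetry so do `ad`, `bc` and `bd`.
Hence the `p` double stars of the crossing family, together with the stars at the `n - 2p`
points off it, cover all edges; disjointifying this cover gives `n - p` plane classes.
-/

/-- Twice the signed area of the triangle `abz`: positive iff `z` is left of the line `ab`. -/
def side (a b z : Pt) : ℝ := (b 0 - a 0) * (z 1 - a 1) - (b 1 - a 1) * (z 0 - a 0)

lemma side_swap (a b z : Pt) : side b a z = -side a b z := by
  simp only [side]; ring

lemma collinear_of_side_eq_zero {a b c : Pt} (h : side a b c = 0) :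
    Collinear ℝ ({a, b, c} : Set Pt) := by
  by_cases hab : a = b
  · simp [hab, collinear_pair]
  obtain ⟨i, hi⟩ : ∃ i, b i - a i ≠ 0 := by
    by_contra! h'
    exact hab (by ext i; linarith [h' i])
  have hc : AffineMap.lineMap a b ((c i - a i) / (b i - a i)) = c := by
    ext j
    simp only [AffineMap.lineMap_apply_module', PiLp.add_apply, PiLp.smul_apply,
      PiLp.sub_apply, smul_eq_mul]
    field_simp
    fin_cases i <;> fin_cases j <;> simp [side] at h hi ⊢ <;> linarith
  rw [Set.pair_comm, Set.insert_comm]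
  exact collinear_insert_of_mem_affineSpan_pair
    (hc ▸ AffineMap.lineMap_mem_affineSpan_pair _ a b)

lemma side_ne_zero_of_not_collinear {a b c : Pt} (h : ¬ Collinear ℝ ({a, b, c} : Set Pt)) :
    side a b c ≠ 0 :=
  mt collinear_of_side_eq_zero h

lemma side_mul_side_nonpos {a b c d : Pt}
    (h : (openSegment ℝ a b ∩ openSegment ℝ c d).Nonempty) :
    side a b c * side c d a ≤ 0 := by
  obtain ⟨q, hab, hcd⟩ := h
  rw [openSegment_eq_image'] at hab hcd
  obtain ⟨t, ⟨ht, -⟩, rfl⟩ := hab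
  obtain ⟨s, ⟨hs, -⟩, hq⟩ := hcd
  have h0 := congrArg (· 0) hq
  have h1 := congrArg (· 1) hq
  simp only [PiLp.add_apply, PiLp.smul_apply, PiLp.sub_apply, smul_eq_mul] at h0 h1
  -- `side a b c = -s K` and `side c d a = t K`, where `K = det (b - a, d - c)`
  have key : t * side a b c = -(s * side c d a) := by
    simp only [side]
    linear_combination (t * (b 0 - a 0) - s * (d 0 - c 0)) * h1
      - (t * (b 1 - a 1) - s * (d 1 - c 1)) * h0
  have : t * (side a b c * side c d a) ≤ 0 := by
    rw [← mul_assoc, key]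
    nlinarith [mul_nonneg hs.le (mul_self_nonneg (side c d a))]
  exact nonpos_of_mul_nonpos_right this ht

lemma disjoint_openSegment_of_side {a b x y : Pt} (hx : side a b x < 0) (hy : 0 < side a b y) :
    Disjoint (openSegment ℝ a x) (openSegment ℝ b y) := by
  rw [Set.disjoint_left, openSegment_eq_image', openSegment_eq_image']
  rintro _ ⟨t, ⟨ht, -⟩, rfl⟩ ⟨s, ⟨hs, -⟩, hq⟩
  have h0 := congrArg (· 0) hq
  have h1 := congrArg (· 1) hq
  simp only [PiLp.add_apply, PiLp.smul_apply, PiLp.sub_apply, smul_eq_mul] at h0 h1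
  -- both sides are `side a b` of the common point
  have key : s * side a b y = t * side a b x := by
    simp only [side]
    linear_combination (b 0 - a 0) * h1 - (b 1 - a 1) * h0
  nlinarith [mul_pos hs hy, mul_pos ht (neg_pos.2 hx)]

lemma Cross.notMem_of_mem {e f : Sym2 Pt} (h : Cross e f) {z : Pt} (hze : z ∈ e) : z ∉ f := by
  obtain ⟨a, b, c, d, rfl, rfl, hac, had, hbc, hbd, -⟩ := h
  rcases Sym2.mem_iff.1 hze with rfl | rfl <;> simp [*]

lemma Cross.ne_of_mem {e f : Sym2 Pt} (h : Cross e f) {z w : Pt} (hz : z ∈ e) (hw : w ∈ f) :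
    z ≠ w :=
  fun hzw => h.notMem_of_mem hz (hzw ▸ hw)

lemma Cross.symm {e f : Sym2 Pt} (h : Cross e f) : Cross f e := by
  obtain ⟨a, b, c, d, he, hf, hac, had, hbc, hbd, q, hqe, hqf⟩ := h
  exact ⟨c, d, a, b, hf, he, hac.symm, hbc.symm, had.symm, hbd.symm, q, hqf, hqe⟩

lemma openSegment_eq_of_mk_eq {a b c d : Pt} (h : s(a, b) = s(c, d)) :
    openSegment ℝ a b = openSegment ℝ c d := by
  rcases Sym2.eq_iff.1 h with ⟨rfl, rfl⟩ | ⟨rfl, rfl⟩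
  exacts [rfl, openSegment_symm ℝ _ _]

lemma Cross.openSegment_inter_nonempty {a b c d : Pt} (h : Cross s(a, b) s(c, d)) :
    (openSegment ℝ a b ∩ openSegment ℝ c d).Nonempty := by
  obtain ⟨a', b', c', d', he, hf, -, -, -, -, hq⟩ := h
  rwa [openSegment_eq_of_mk_eq he, openSegment_eq_of_mk_eq hf]

lemma not_cross_of_side_neg_of_side_pos {a b x y : Pt} (hx : side a b x < 0)
    (hy : 0 < side a b y) : ¬ Cross s(a, x) s(b, y) := fun h =>
  h.openSegment_inter_nonempty.ne_empty (disjoint_openSegment_of_side hx hy).inter_eq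

lemma PlaneEdges.mono {E E' : Set (Sym2 Pt)} (hE : PlaneEdges E) (h : E' ⊆ E) :
    PlaneEdges E' :=
  fun e he f hf => hE e (h he) f (h hf)

def incidentEdges (v : Pt) : Set (Sym2 Pt) := {f | v ∈ f}

lemma planeEdges_incidentEdges (v : Pt) : PlaneEdges (incidentEdges v) :=
  fun _ he _ hf hef => hef.notMem_of_mem he hf

/-- Both orderings `(a, b)` of `e` are allowed, so this is `e` together with the edges from `a`
to the points right of `ab` and the edges from `b` to the points left of `ab`. -/
def doubleStar (e : Sym2 Pt) : Set (Sym2 Pt) :=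
  {f | f = e ∨ ∃ a b z, e = s(a, b) ∧ f = s(a, z) ∧ side a b z < 0}

lemma planeEdges_doubleStar (e : Sym2 Pt) : PlaneEdges (doubleStar e) := by
  have meets : ∀ f ∈ doubleStar e, ∃ z ∈ e, z ∈ f := by
    rintro f (rfl | ⟨a, b, z, rfl, rfl, -⟩)
    exacts [⟨_, Sym2.out_fst_mem f, Sym2.out_fst_mem f⟩,
      ⟨a, Sym2.mem_mk_left a b, Sym2.mem_mk_left a z⟩]
  rintro f₁ (rfl | ⟨a, b, z, rfl, rfl, hz⟩) f₂ hf₂ hcross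
  · obtain ⟨x, hx, hx₂⟩ := meets f₂ hf₂
    exact hcross.notMem_of_mem hx hx₂
  rcases hf₂ with rfl | ⟨a', b', z', he, rfl, hz'⟩
  · exact hcross.notMem_of_mem (Sym2.mem_mk_left a z) (Sym2.mem_mk_left a b)
  rcases Sym2.eq_iff.1 he with ⟨rfl, rfl⟩ | ⟨rfl, rfl⟩
  · exact hcross.notMem_of_mem (Sym2.mem_mk_left a z) (Sym2.mem_mk_left a z')
  · rw [side_swap] at hz'
    exact not_cross_of_side_neg_of_side_pos hz (neg_lt_zero.1 hz') hcross

lemma mem_doubleStar_union_of_openSegment {a b c d : Pt}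
    (habc : ¬ Collinear ℝ ({a, b, c} : Set Pt)) (hcda : ¬ Collinear ℝ ({c, d, a} : Set Pt))
    (h : (openSegment ℝ a b ∩ openSegment ℝ c d).Nonempty) :
    s(a, c) ∈ doubleStar s(a, b) ∪ doubleStar s(c, d) := by
  rcases (side_ne_zero_of_not_collinear habc).lt_or_gt with hc | hc
  · exact Or.inl (Or.inr ⟨a, b, c, rfl, rfl, hc⟩)
  · have ha : side c d a < 0 :=
      (side_ne_zero_of_not_collinear hcda).lt_of_le (by nlinarith [side_mul_side_nonpos h])
    exact Or.inr (Or.inr ⟨c, d, a, rfl, Sym2.eq_swap, ha⟩)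

lemma mem_of_mem_edges {A : Set Pt} {e : Sym2 Pt} (he : e ∈ edges A) {z : Pt} (hz : z ∈ e) :
    z ∈ A := by
  obtain ⟨a, ha, b, hb, -, rfl⟩ := he
  rcases Sym2.mem_iff.1 hz with rfl | rfl <;> assumption

lemma not_isDiag_of_mem_edges {A : Set Pt} {e : Sym2 Pt} (he : e ∈ edges A) : ¬ e.IsDiag := by
  obtain ⟨a, -, b, -, hab, rfl⟩ := he
  simpa using hab

lemma mem_doubleStar_union_of_cross {A : Set Pt} (hA : GenPos A) {e f : Sym2 Pt}
    (he : e ∈ edges A) (hf : f ∈ edges A) (hef : Cross e f) {x y : Pt} (hx : x ∈ e)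
    (hy : y ∈ f) : s(x, y) ∈ doubleStar e ∪ doubleStar f := by
  obtain ⟨x', rfl⟩ : ∃ x', e = s(x, x') := ⟨_, (Sym2.other_spec hx).symm⟩
  obtain ⟨y', rfl⟩ : ∃ y', f = s(y, y') := ⟨_, (Sym2.other_spec hy).symm⟩
  have hxA := mem_of_mem_edges he (Sym2.mem_mk_left x x')
  have hx'A := mem_of_mem_edges he (Sym2.mem_mk_right x x')
  have hyA := mem_of_mem_edges hf (Sym2.mem_mk_left y y')
  have hy'A := mem_of_mem_edges hf (Sym2.mem_mk_right y y')
  have hxx' : x ≠ x' := by simpa using not_isDiag_of_mem_edges he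
  have hyy' : y ≠ y' := by simpa using not_isDiag_of_mem_edges hf
  have hxy := hef.ne_of_mem (Sym2.mem_mk_left x x') (Sym2.mem_mk_left y y')
  have hx'y := hef.ne_of_mem (Sym2.mem_mk_right x x') (Sym2.mem_mk_left y y')
  have hy'x := hef.symm.ne_of_mem (Sym2.mem_mk_right y y') (Sym2.mem_mk_left x x')
  exact mem_doubleStar_union_of_openSegment (hA x hxA x' hx'A y hyA hxx' hxy hx'y)
    (hA y hyA y' hy'A x hxA hyy' hxy.symm hy'x) hef.openSegment_inter_nonempty

lemma edges_subset_iUnion_doubleStar_union_iUnion_incidentEdges [DecidableEq Pt] {A : Finset Pt}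
    (hA : GenPos ↑A) {C : Finset (Sym2 Pt)} (hC : ↑C ⊆ edges ↑A)
    (hcross : ∀ e ∈ C, ∀ f ∈ C, e ≠ f → Cross e f) :
    edges ↑A ⊆ (⋃ e : C, doubleStar e) ∪
      ⋃ v : ↥(A \ C.biUnion Sym2.toFinset), incidentEdges v := by
  rintro _ ⟨x, hx, y, hy, hxy, rfl⟩
  by_cases hxC : x ∈ C.biUnion Sym2.toFinset; swap
  · exact Or.inr <| Set.mem_iUnion.2
      ⟨⟨x, Finset.mem_sdiff.2 ⟨hx, hxC⟩⟩, Sym2.mem_mk_left x y⟩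
  by_cases hyC : y ∈ C.biUnion Sym2.toFinset; swap
  · exact Or.inr <| Set.mem_iUnion.2
      ⟨⟨y, Finset.mem_sdiff.2 ⟨hy, hyC⟩⟩, Sym2.mem_mk_right x y⟩
  simp only [Finset.mem_biUnion, Sym2.mem_toFinset] at hxC hyC
  obtain ⟨e, he, hxe⟩ := hxC
  obtain ⟨f, hf, hyf⟩ := hyC
  left
  by_cases hef : e = f
  · subst hef
    exact Set.mem_iUnion.2
      ⟨⟨e, he⟩, Or.inl ((Sym2.mem_and_mem_iff hxy).1 ⟨hxe, hyf⟩).symm⟩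
  rcases mem_doubleStar_union_of_cross hA (hC he) (hC hf) (hcross e he f hf hef) hxe hyf
    with h | h
  exacts [Set.mem_iUnion.2 ⟨⟨e, he⟩, h⟩, Set.mem_iUnion.2 ⟨⟨f, hf⟩, h⟩]

lemma Cross.disjoint_toFinset [DecidableEq Pt] {e f : Sym2 Pt} (h : Cross e f) :
    Disjoint e.toFinset f.toFinset :=
  Finset.disjoint_left.2 fun _ hz hz' =>
    h.notMem_of_mem (Sym2.mem_toFinset.1 hz) (Sym2.mem_toFinset.1 hz')

lemma Sym2.card_biUnion_toFinset {α : Type*} [DecidableEq α] {C : Finset (Sym2 α)}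
    (hdiag : ∀ e ∈ C, ¬ e.IsDiag)
    (hdisj : (C : Set (Sym2 α)).PairwiseDisjoint Sym2.toFinset) :
    (C.biUnion Sym2.toFinset).card = 2 * C.card := by
  rw [Finset.card_biUnion hdisj,
    Finset.sum_congr rfl fun e he => Sym2.card_toFinset_of_not_isDiag e (hdiag e he),
    Finset.sum_const, smul_eq_mul, mul_comm]

lemma exists_partition_of_subset_iUnion {X ι : Type*} [Fintype ι] {m : ℕ}
    (hm : Fintype.card ι = m) (G : ι → Set X) {S : Set X} (hS : S ⊆ ⋃ i, G i) :
    ∃ F : Fin m → Set X,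
      (⋃ k, F k) = S ∧ Pairwise (Function.onFun Disjoint F) ∧ ∀ k, ∃ i, F k ⊆ G i := by
  let σ := (Fintype.equivFinOfCardEq hm).symm
  refine ⟨disjointed fun k => G (σ k) ∩ S, ?_, disjoint_disjointed _,
    fun k => ⟨σ k, (disjointed_subset _ k).trans Set.inter_subset_left⟩⟩
  rw [iUnion_disjointed, ← Set.iUnion_inter, σ.surjective.iUnion_comp G, Set.inter_eq_right]
  exact hS

theorem crossing_family_partition_general (n p : ℕ)
    (A : Finset Pt) (hA : A.card = n) (hgp : GenPos ↑A)
    (C : Finset (Sym2 Pt)) (hCsub : ↑C ⊆ edges ↑A) (hCcard : C.card = p)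
    (hcross : ∀ e ∈ C, ∀ f ∈ C, e ≠ f → Cross e f) :
    ∃ F : Fin (n - p) → Set (Sym2 Pt),
      IsPartitionInto ↑A (n - p) F ∧ ∀ i, PlaneEdges (F i) := by
  classical
  set V := C.biUnion Sym2.toFinset
  have hVcard : V.card = 2 * p := hCcard ▸ Sym2.card_biUnion_toFinset
    (fun e he => not_isDiag_of_mem_edges (hCsub he))
    (fun e he f hf hef => (hcross e he f hf hef).disjoint_toFinset)
  have hVA : V ⊆ A := fun z hz => by
    obtain ⟨e, he, hze⟩ := Finset.mem_biUnion.1 hz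
    exact mem_of_mem_edges (hCsub he) (Sym2.mem_toFinset.1 hze)
  have hcard : Fintype.card (C ⊕ ↥(A \ V)) = n - p := by
    have := Finset.card_le_card hVA
    simp only [Fintype.card_sum, Fintype.card_coe, Finset.card_sdiff_of_subset hVA]
    omega
  have hcover := edges_subset_iUnion_doubleStar_union_iUnion_incidentEdges hgp hCsub hcross
  rw [← Set.iUnion_sumElim] at hcover
  obtain ⟨F, hFcover, hFdisj, hFsub⟩ := exists_partition_of_subset_iUnion hcard _ hcover
  refine ⟨F, ⟨hFcover, hFdisj⟩, fun k => ?_⟩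
  obtain ⟨e | v, hk⟩ := hFsub k
  exacts [(planeEdges_doubleStar e).mono hk, (planeEdges_incidentEdges v).mono hk]

/-- If the complete geometric graph on `n` points in general position contains `p ≥ 1`
pairwise crossing edges, then its edge set can be partitioned into `n - p`
plane subgraphs. -/
theorem crossing_family_partition (n p : ℕ) (hp : 1 ≤ p)
    (A : Finset Pt) (hA : A.card = n) (hgp : GenPos ↑A)
    (C : Finset (Sym2 Pt)) (hCsub : ↑C ⊆ edges ↑A) (hCcard : C.card = p)
    (hcross : ∀ e ∈ C, ∀ f ∈ C, e ≠ f → Cross e f) :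
    ∃ F : Fin (n - p) → Set (Sym2 Pt),
      IsPartitionInto ↑A (n - p) F ∧ ∀ i, PlaneEdges (F i) :=
  crossing_family_partition_general n p A hA hgp C hCsub hCcard hcross
end
end

section
/- For every ε > 0 there exist infinitely many even integers n with the following property: there is a set A of n points in the plane in general position whose ratio of maximum to minimum pairwise distance is at most (√2 + ε)·√n, such that the complete geometric graph induced by A contains n/2 pairwise crossing edges; consequently, every partition of the edge set of this complete geometric graph into plane subgraphs consists of at least n/2 parts. -/
/-!
The `2s × 2s` grid of half-integer points centred at the origin is centrally symmetric,
`1`-separated and has diameter `√2 (2s - 1) < √2 · √n` for `n = 4s²`. Move each point `p` of its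
lower half by less than `η` to a point `g p` chosen off the finitely many lines spanned by the
origin and the points already placed (and their negatives), and take the set of all `± g p`: it
is still centrally symmetric, it is in general position, and for small `η` it is
`(√2 + ε)`-dense. In a centrally symmetric set the `n/2` segments `[p, -p]` share their midpoint
`0`, so they pairwise cross, and a plane subgraph contains at most one of them.
-/

noncomputable section

/-- `A` is `α`-dense: the ratio of the maximum to the minimum pairwise distance
in `A` is at most `α * √(A.card)`. -/
def AlphaDense (α : ℝ) (A : Finset Pt) : Prop :=
  ∀ p ∈ A, ∀ q ∈ A, ∀ p' ∈ A, ∀ q' ∈ A, p ≠ q → p' ≠ q' →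
    dist p q ≤ α * Real.sqrt A.card * dist p' q'

open Pointwise

theorem affineSpan_pair_ne_top {k V P : Type*} [DivisionRing k] [AddCommGroup V] [Module k V]
    [AddTorsor V P] [FiniteDimensional k V] (h : 1 < Module.finrank k V) (x y : P) :
    line[k, x, y] ≠ ⊤ := by
  intro htop
  have hspan : vectorSpan k ({x, y} : Set P) = ⊤ := by
    rw [← direction_affineSpan, htop, AffineSubspace.direction_top]
  have hle : Module.finrank k (vectorSpan k ({x, y} : Set P)) ≤ 1 := by
    rw [vectorSpan_pair]
    exact (finrank_span_le_card _).trans (by simp)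
  rw [hspan, finrank_top] at hle
  omega

theorem Collinear.neg {k V : Type*} [DivisionRing k] [AddCommGroup V] [Module k V] {s : Set V}
    (h : Collinear k s) : Collinear k (-s) := by
  rw [collinear_iff_exists_forall_eq_smul_vadd] at h ⊢
  obtain ⟨p₀, v, hv⟩ := h
  refine ⟨-p₀, -v, fun p hp => ?_⟩
  obtain ⟨r, hr⟩ := hv (-p) hp
  refine ⟨r, ?_⟩
  rw [vadd_eq_add] at hr ⊢
  rw [smul_neg, ← neg_add, ← hr, neg_neg]

theorem exists_mem_ball_forall_notMem {E ι : Type*} [NormedAddCommGroup E] [NormedSpace ℝ E]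
    [FiniteDimensional ℝ E] (s : Finset ι) (L : ι → AffineSubspace ℝ E) (hL : ∀ i ∈ s, L i ≠ ⊤)
    (x : E) {r : ℝ} (hr : 0 < r) : ∃ v ∈ Metric.ball x r, ∀ i ∈ s, v ∉ L i := by
  borelize E
  let μ : MeasureTheory.Measure E := MeasureTheory.Measure.addHaar
  have hnull : μ (⋃ i ∈ s, (L i : Set E)) = 0 :=
    (MeasureTheory.measure_biUnion_null_iff s.countable_toSet).2 fun i hi =>
      MeasureTheory.Measure.addHaar_affineSubspace μ _ (hL i hi)
  have hcover : ¬ Metric.ball x r ⊆ ⋃ i ∈ s, (L i : Set E) := fun hsub =>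
    (Metric.measure_ball_pos μ x hr).ne' (MeasureTheory.measure_mono_null hsub hnull)
  simpa [Set.not_subset] using hcover

theorem GenPos.insert {S : Set Pt} {v : Pt} (hS : GenPos S)
    (hv : ∀ x ∈ S, ∀ y ∈ S, x ≠ y → ¬ Collinear ℝ ({v, x, y} : Set Pt)) :
    GenPos (insert v S) := by
  rintro p (rfl | hp) q (rfl | hq) r (rfl | hr) hpq hpr hqr
  · exact absurd rfl hpq
  · exact absurd rfl hpq
  · exact absurd rfl hpr
  · exact hv q hq r hr hqr
  · exact absurd rfl hqr
  · rw [Set.insert_comm]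
    exact hv p hp r hr hpr
  · rw [Set.pair_comm q r, Set.insert_comm]
    exact hv p hp q hq hpq
  · exact hS p hp q hq r hr hpq hpr hqr

theorem exists_near_forall_notMem_affineSpan_pair {E : Type*} [NormedAddCommGroup E]
    [NormedSpace ℝ E] [FiniteDimensional ℝ E] (hE : 1 < Module.finrank ℝ E) {T : Set E}
    (hT : T.Finite) (b : E) {η : ℝ} (hη : 0 < η) :
    ∃ v, dist v b < η ∧ ∀ x ∈ T, ∀ y ∈ T, v ∉ line[ℝ, x, y] := by
  obtain ⟨v, hvb, hvT⟩ := exists_mem_ball_forall_notMem (hT.toFinset ×ˢ hT.toFinset)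
    (fun xy => line[ℝ, xy.1, xy.2]) (fun _ _ => affineSpan_pair_ne_top hE _ _) b hη
  exact ⟨v, hvb, fun x hx y hy => hvT (x, y) (by simpa using And.intro hx hy)⟩

theorem exists_near_genPos_insert_insert_neg {S : Set Pt} (hfin : S.Finite) (hsymm : -S = S)
    (h0 : (0 : Pt) ∉ S) (hS : GenPos S) (b : Pt) {η : ℝ} (hη : 0 < η) :
    ∃ v, dist v b < η ∧ v ≠ 0 ∧ GenPos (insert v (insert (-v) S)) := by
  obtain ⟨v, hvb, hline⟩ :=
    exists_near_forall_notMem_affineSpan_pair (by simp) (hfin.insert 0) b hη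
  have hv0 : v ≠ 0 := by
    rintro rfl
    exact hline 0 (Set.mem_insert _ _) 0 (Set.mem_insert _ _) (left_mem_affineSpan_pair _ _ _)
  have hvS : ∀ x ∈ S, ∀ y ∈ S, x ≠ y → ¬ Collinear ℝ ({v, x, y} : Set Pt) :=
    fun x hx y hy hxy hcol => hline x (Or.inr hx) y (Or.inr hy)
      (hcol.mem_affineSpan_of_mem_of_ne (by simp) (by simp) (by simp) hxy)
  have hnegS : ∀ x ∈ S, ∀ y ∈ S, x ≠ y → ¬ Collinear ℝ ({-v, x, y} : Set Pt) := by
    intro x hx y hy hxy hcol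
    have hmem : ∀ z ∈ S, -z ∈ S := fun z hz => by rwa [← Set.mem_neg, hsymm]
    exact hvS (-x) (hmem x hx) (-y) (hmem y hy) (by simpa using hxy)
      (by simpa [Set.neg_insert] using hcol.neg)
  have hantipodal : ∀ y ∈ S, ¬ Collinear ℝ ({v, -v, y} : Set Pt) := by
    intro y hy hcol
    have hmid : (0 : Pt) ∈ line[ℝ, v, -v] := by
      rw [← midpoint_self_neg ℝ v]
      exact AffineMap.lineMap_mem_affineSpan_pair _ _ _
    have h4 : Collinear ℝ ({0, v, -v, y} : Set Pt) :=
      (collinear_insert_iff_of_mem_affineSpan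
        (affineSpan_mono ℝ (by simp [Set.insert_subset_iff]) hmid)).2 hcol
    have h3 : Collinear ℝ ({0, y, v} : Set Pt) := h4.subset (by simp [Set.insert_subset_iff])
    exact hline 0 (Set.mem_insert _ _) y (Or.inr hy)
      (h3.mem_affineSpan_of_mem_of_ne (by simp) (by simp) (by simp) (fun h => h0 (h ▸ hy)))
  refine ⟨v, hvb, hv0, (hS.insert hnegS).insert ?_⟩
  rintro x (rfl | hx) y (rfl | hy) hxy
  · exact absurd rfl hxy
  · exact hantipodal y hy
  · rw [Set.pair_comm]
    exact hantipodal x hx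
  · exact hvS x hx y hy hxy

theorem exists_near_genPos_range_union_neg {ι : Type*} [Finite ι] (b : ι → Pt) {η : ℝ}
    (hη : 0 < η) : ∃ g : ι → Pt, (∀ i, dist (g i) (b i) < η) ∧
      (0 : Pt) ∉ Set.range g ∪ -Set.range g ∧ GenPos (Set.range g ∪ -Set.range g) := by
  suffices key : ∀ n (b : Fin n → Pt), ∃ g : Fin n → Pt, (∀ i, dist (g i) (b i) < η) ∧
      (0 : Pt) ∉ Set.range g ∪ -Set.range g ∧ GenPos (Set.range g ∪ -Set.range g) by
    obtain ⟨n, ⟨e⟩⟩ := Finite.exists_equiv_fin ι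
    obtain ⟨g, hg, h0, hgp⟩ := key n (b ∘ e.symm)
    refine ⟨g ∘ e, fun i => by simpa using hg (e i), ?_⟩
    rw [e.surjective.range_comp]
    exact ⟨h0, hgp⟩
  intro n
  induction n with
  | zero => exact fun _ => ⟨Fin.elim0, fun i => i.elim0, by simp, by simp [GenPos]⟩
  | succ n ih =>
    intro b
    obtain ⟨g, hg, h0, hgp⟩ := ih (fun i => b i.succ)
    obtain ⟨v, hv, hv0, hgp'⟩ := exists_near_genPos_insert_insert_neg
      ((Set.finite_range g).union (Set.finite_range g).neg)
      (by rw [Set.union_neg, neg_neg, Set.union_comm]) h0 hgp (b 0) hη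
    have hrange : Set.range (Fin.cons v g : Fin (n + 1) → Pt) ∪ -Set.range (Fin.cons v g) =
        insert v (insert (-v) (Set.range g ∪ -Set.range g)) := by
      rw [Fin.range_cons, Set.neg_insert, Set.insert_union, Set.union_insert]
    refine ⟨Fin.cons v g, Fin.cases hv hg, ?_, hrange ▸ hgp'⟩
    rw [hrange]
    rintro (h | h | h)
    · exact hv0 h.symm
    · exact hv0 (neg_eq_zero.1 h.symm)
    · exact h0 h

theorem cross_of_midpoint_eq {a b c d : Pt} (hac : a ≠ c) (had : a ≠ d) (hbc : b ≠ c)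
    (hbd : b ≠ d) (h : midpoint ℝ a b = midpoint ℝ c d) : Cross s(a, b) s(c, d) :=
  ⟨a, b, c, d, rfl, rfl, hac, had, hbc, hbd, midpoint ℝ a b, midpoint_mem_openSegment a b,
    h ▸ midpoint_mem_openSegment c d⟩

theorem card_eq_two_mul_card_image_mk_neg {α : Type*} [InvolutiveNeg α] [DecidableEq α]
    {A : Finset α} (hA : ∀ p ∈ A, -p ∈ A) (hne : ∀ p ∈ A, p ≠ -p) :
    A.card = 2 * (A.image fun p => s(p, -p)).card := by
  have hfiber : ∀ e ∈ A.image fun p => s(p, -p), {a ∈ A | s(a, -a) = e}.card = 2 := by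
    intro e he
    obtain ⟨p, hp, rfl⟩ := Finset.mem_image.1 he
    have : {a ∈ A | s(a, -a) = s(p, -p)} = {p, -p} := by
      ext a
      simp only [Finset.mem_filter, Sym2.eq_iff, neg_inj, Finset.mem_insert,
        Finset.mem_singleton]
      constructor
      · rintro ⟨-, ⟨h, -⟩ | ⟨h, -⟩⟩ <;> simp [h]
      · rintro (rfl | rfl)
        · exact ⟨hp, Or.inl ⟨rfl, rfl⟩⟩
        · exact ⟨hA p hp, Or.inr ⟨rfl, neg_neg p⟩⟩
    rw [this, Finset.card_pair (hne p hp)]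
  rw [Finset.card_eq_sum_card_image (fun p => s(p, -p)) A, Finset.sum_congr rfl hfiber,
    Finset.sum_const, smul_eq_mul, mul_comm]

theorem exists_pairwise_cross_of_neg_mem (A : Finset Pt) (hA : ∀ p ∈ A, -p ∈ A)
    (h0 : (0 : Pt) ∉ A) : ∃ C : Finset (Sym2 Pt), ↑C ⊆ edges ↑A ∧ C.card = A.card / 2 ∧
      ∀ e ∈ C, ∀ f ∈ C, e ≠ f → Cross e f := by
  classical
  have hne : ∀ p ∈ A, p ≠ -p := by
    intro p hp h
    have h2 : (2 : ℝ) • p = 0 := by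
      rw [two_smul]
      nth_rw 2 [h]
      exact add_neg_cancel p
    exact h0 ((smul_eq_zero.1 h2).resolve_left two_ne_zero ▸ hp)
  refine ⟨A.image fun p => s(p, -p), ?_, ?_, ?_⟩
  · intro e he
    obtain ⟨p, hp, rfl⟩ := Finset.mem_image.1 he
    exact ⟨p, hp, -p, hA p hp, hne p hp, rfl⟩
  · rw [card_eq_two_mul_card_image_mk_neg hA hne, Nat.mul_div_cancel_left _ two_pos]
  · intro e he f hf hef
    obtain ⟨p, -, rfl⟩ := Finset.mem_image.1 he
    obtain ⟨q, -, rfl⟩ := Finset.mem_image.1 hf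
    have hpq : p ≠ q := by rintro rfl; exact hef rfl
    have hpq' : p ≠ -q := by rintro rfl; exact hef (by rw [neg_neg, Sym2.eq_swap])
    refine cross_of_midpoint_eq hpq hpq' (fun h => hpq' (by rw [← h, neg_neg]))
      (fun h => hpq (neg_inj.1 h)) ?_
    rw [midpoint_self_neg, midpoint_self_neg]

theorem card_le_of_edges_subset_iUnion {A : Set Pt} {m : ℕ} {F : Fin m → Set (Sym2 Pt)}
    (hF : edges A ⊆ ⋃ i, F i) (hplane : ∀ i, PlaneEdges (F i)) {C : Finset (Sym2 Pt)}
    (hCA : ↑C ⊆ edges A) (hC : ∀ e ∈ C, ∀ f ∈ C, e ≠ f → Cross e f) : C.card ≤ m := by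
  simpa using Finset.card_le_card_of_forall_subsingleton (fun e i => e ∈ F i)
    (t := Finset.univ)
    (fun e he => by
      obtain ⟨i, hi⟩ := Set.mem_iUnion.1 (hF (hCA he))
      exact ⟨i, Finset.mem_univ _, hi⟩)
    (fun i _ e ⟨he, hei⟩ f ⟨hf, hfi⟩ => by
      by_contra hef
      exact hplane i e hei f hfi (hC e he f hf hef))

theorem Pairwise.sub_two_mul_le_dist {X ι : Type*} [PseudoMetricSpace X] {b g : ι → X}
    {δ η : ℝ} (hb : Pairwise fun i j => δ ≤ dist (b i) (b j)) (hg : ∀ i, dist (g i) (b i) < η) :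
    Pairwise fun i j => δ - 2 * η ≤ dist (g i) (g j) := fun i j hij => by
  have := dist_triangle4 (b i) (g i) (g j) (b j)
  rw [dist_comm (b i) (g i)] at this
  linarith [hb hij, hg i, hg j]

theorem alphaDense_of_norm_le {α ρ δ : ℝ} {A : Finset Pt} (hα : 0 ≤ α)
    (hnorm : ∀ p ∈ A, ‖p‖ ≤ ρ) (hsep : ∀ p ∈ A, ∀ q ∈ A, p ≠ q → δ ≤ dist p q)
    (h : 2 * ρ ≤ α * √A.card * δ) : AlphaDense α A := by
  intro p hp q hq p' hp' q' hq' _ hpq'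
  calc dist p q ≤ ‖p‖ + ‖q‖ := dist_le_norm_add_norm p q
    _ ≤ 2 * ρ := by linarith [hnorm p hp, hnorm q hq]
    _ ≤ α * √A.card * δ := h
    _ ≤ α * √A.card * dist p' q' := by gcongr; exact hsep p' hp' q' hq' hpq'

theorem abs_sub_apply_le_dist (p q : Pt) (j : Fin 2) : |p j - q j| ≤ dist p q := by
  rw [dist_eq_norm, ← Real.norm_eq_abs]
  exact PiLp.norm_apply_le (p - q) j

theorem one_le_abs_natCast_sub {a b : ℕ} (h : a ≠ b) : (1 : ℝ) ≤ |(a : ℝ) - b| := by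
  have : (1 : ℤ) ≤ |(a : ℤ) - b| := Int.one_le_abs (sub_ne_zero.2 (by exact_mod_cast h))
  exact_mod_cast this

/-- The lower half of the `2s × 2s` grid of half-integer points centred at the origin. -/
def lowerHalfGrid (s : ℕ) (ij : Fin (2 * s) × Fin s) : Pt :=
  !₂[((ij.1 : ℕ) : ℝ) - s + 1 / 2, ((ij.2 : ℕ) : ℝ) - s + 1 / 2]

section LowerHalfGrid

variable {s : ℕ}

theorem lowerHalfGrid_apply_one_le (ij : Fin (2 * s) × Fin s) :
    lowerHalfGrid s ij 1 ≤ -(1 / 2) := by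
  have : ((ij.2 : ℕ) : ℝ) + 1 ≤ s := by exact_mod_cast ij.2.isLt
  simp only [lowerHalfGrid, Fin.isValue, Matrix.cons_val_one, Matrix.cons_val_fin_one]
  linarith

theorem norm_lowerHalfGrid_le (ij : Fin (2 * s) × Fin s) :
    ‖lowerHalfGrid s ij‖ ≤ √2 * (s - 1 / 2) := by
  have hi : ((ij.1 : ℕ) : ℝ) + 1 ≤ 2 * s := by exact_mod_cast ij.1.isLt
  have hj : ((ij.2 : ℕ) : ℝ) + 1 ≤ s := by exact_mod_cast ij.2.isLt
  have hs : (1 : ℝ) / 2 ≤ s - 1 / 2 := by linarith [(ij.2 : ℕ).cast_nonneg (α := ℝ)]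
  rw [EuclideanSpace.norm_eq, Fin.sum_univ_two,
    ← Real.sqrt_mul_self (by linarith : (0 : ℝ) ≤ s - 1 / 2), ← Real.sqrt_mul (by norm_num)]
  gcongr
  simp only [lowerHalfGrid, Fin.isValue, Matrix.cons_val_zero, Matrix.cons_val_one,
    Matrix.cons_val_fin_one, Real.norm_eq_abs, sq_abs]
  nlinarith [(ij.1 : ℕ).cast_nonneg (α := ℝ), (ij.2 : ℕ).cast_nonneg (α := ℝ)]

theorem one_le_dist_lowerHalfGrid {ij ij' : Fin (2 * s) × Fin s} (h : ij ≠ ij') :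
    1 ≤ dist (lowerHalfGrid s ij) (lowerHalfGrid s ij') := by
  by_cases h1 : ij.1 = ij'.1
  · have h2 : (ij.2 : ℕ) ≠ ij'.2 := fun h2 => h (Prod.ext h1 (Fin.ext h2))
    refine (one_le_abs_natCast_sub h2).trans (le_of_eq_of_le ?_ (abs_sub_apply_le_dist _ _ 1))
    simp [lowerHalfGrid]
  · refine (one_le_abs_natCast_sub (Fin.val_injective.ne h1)).trans
      (le_of_eq_of_le ?_ (abs_sub_apply_le_dist _ _ 0))
    simp [lowerHalfGrid]

theorem one_le_dist_lowerHalfGrid_neg (ij ij' : Fin (2 * s) × Fin s) :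
    1 ≤ dist (lowerHalfGrid s ij) (-lowerHalfGrid s ij') := by
  have h := lowerHalfGrid_apply_one_le ij
  have h' := lowerHalfGrid_apply_one_le ij'
  refine le_trans ?_ (abs_sub_apply_le_dist _ _ 1)
  rw [abs_sub_comm, PiLp.neg_apply]
  exact le_abs.2 (Or.inl (by linarith))

end LowerHalfGrid

theorem pairwise_one_le_dist_lowerHalfGrid_sumElim_neg (s : ℕ) :
    Pairwise fun x y : (Fin (2 * s) × Fin s) ⊕ (Fin (2 * s) × Fin s) =>
      1 ≤ dist (Sum.elim (lowerHalfGrid s) (-lowerHalfGrid s) x)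
        (Sum.elim (lowerHalfGrid s) (-lowerHalfGrid s) y) := by
  rintro (ij | ij) (ij' | ij') h
  · exact one_le_dist_lowerHalfGrid (fun h' => h (by rw [h']))
  · exact one_le_dist_lowerHalfGrid_neg ij ij'
  · simpa [dist_comm] using one_le_dist_lowerHalfGrid_neg ij' ij
  · simpa using one_le_dist_lowerHalfGrid (fun h' => h (by rw [h']))

theorem exists_perturbed_grid_genPos {η : ℝ} (hη : 0 < η) (hη_lt : 2 * η < 1) (s : ℕ) :
    ∃ A : Finset Pt, A.card = 4 * s ^ 2 ∧ (∀ p ∈ A, -p ∈ A) ∧ (0 : Pt) ∉ A ∧ GenPos ↑A ∧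
      (∀ p ∈ A, ‖p‖ ≤ √2 * (s - 1 / 2) + η) ∧
      ∀ p ∈ A, ∀ q ∈ A, p ≠ q → 1 - 2 * η ≤ dist p q := by
  classical
  obtain ⟨g, hg, h0, hgp⟩ := exists_near_genPos_range_union_neg (lowerHalfGrid s) hη
  set grid := Sum.elim (lowerHalfGrid s) (-lowerHalfGrid s)
  set f := Sum.elim g (-g)
  have hf : ∀ x, dist (f x) (grid x) < η := by
    rintro (ij | ij) <;> simp [f, grid, hg]
  have hsep := (pairwise_one_le_dist_lowerHalfGrid_sumElim_neg s).sub_two_mul_le_dist hf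
  have hinj : Function.Injective f := fun x y hxy => by
    by_contra hne
    have : 1 - 2 * η ≤ dist (f x) (f y) := hsep hne
    rw [hxy, dist_self] at this
    linarith
  have hA : ((Finset.univ.image f : Finset Pt) : Set Pt) = Set.range g ∪ -Set.range g := by
    rw [Finset.coe_image, Finset.coe_univ, Set.image_univ, Set.Sum.elim_range, Set.neg_range]
    rfl
  refine ⟨Finset.univ.image f, ?_, fun p hp => ?_, by rwa [← Finset.mem_coe, hA], by rwa [hA],
    ?_, ?_⟩
  · rw [Finset.card_image_of_injective _ hinj]
    simp only [Finset.card_univ, Fintype.card_sum, Fintype.card_prod, Fintype.card_fin]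
    ring
  · rw [← Finset.mem_coe, hA] at hp ⊢
    rcases hp with hp | hp
    · exact Or.inr (by simpa using hp)
    · exact Or.inl hp
  · simp only [Finset.mem_image, Finset.mem_univ, true_and, forall_exists_index,
      forall_apply_eq_imp_iff]
    intro x
    have hx : ‖grid x‖ ≤ √2 * (s - 1 / 2) := by
      rcases x with ij | ij <;> simpa [grid] using norm_lowerHalfGrid_le ij
    linarith [norm_le_norm_add_norm_sub' (f x) (grid x), dist_eq_norm (f x) (grid x), hf x]
  · simp only [Finset.mem_image, Finset.mem_univ, true_and, forall_exists_index,
      forall_apply_eq_imp_iff]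
    exact fun x y hxy => hsep fun h => hxy (by rw [h])

theorem exists_dense_genPos_neg_mem {ε : ℝ} (hε : 0 < ε) (s : ℕ) :
    ∃ A : Finset Pt, A.card = 4 * s ^ 2 ∧ (∀ p ∈ A, -p ∈ A) ∧ (0 : Pt) ∉ A ∧ GenPos ↑A ∧
      AlphaDense (√2 + ε) A := by
  set η := ε / (2 * (√2 + ε)) with hη_def
  have hη : 0 < η := by positivity
  have hη_lt : 2 * η < 1 := by
    have h2η : 2 * η = ε / (√2 + ε) := by
      rw [hη_def]
      field_simp
    rw [h2η, div_lt_one (by positivity)]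
    linarith [Real.sqrt_pos.2 two_pos]
  -- `η` is chosen so that the separation `1 - 2η` exactly absorbs the slack `ε`
  have hη_key : (√2 + ε) * (1 - 2 * η) = √2 := by
    rw [hη_def]
    field_simp
    ring
  obtain ⟨A, hcard, hneg, h0, hgp, hnorm, hsep⟩ := exists_perturbed_grid_genPos hη hη_lt s
  refine ⟨A, hcard, hneg, h0, hgp, alphaDense_of_norm_le (by positivity) hnorm hsep ?_⟩
  have hsqrt : √((4 * s ^ 2 : ℕ) : ℝ) = 2 * s := by
    push_cast
    rw [show (4 : ℝ) * s ^ 2 = (2 * s) ^ 2 by ring, Real.sqrt_sq (by positivity)]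
  have hrhs : (√2 + ε) * (2 * s) * (1 - 2 * η) = 2 * s * √2 := by
    linear_combination (2 * (s : ℝ)) * hη_key
  rw [hcard, hsqrt, hrhs]
  linarith [Real.one_le_sqrt.2 (by norm_num : (1 : ℝ) ≤ 2)]

/-- For every `ε > 0` there are arbitrarily large even `n` and `(√2 + ε)`-dense sets of
`n` points in general position whose complete geometric graph contains `n/2` pairwise
crossing edges; consequently, every partition of its edge set into plane subgraphs has
at least `n/2` parts. -/
theorem dense_set_with_large_crossing_family (ε : ℝ) (hε : 0 < ε) (N : ℕ) :
    ∃ n : ℕ, N ≤ n ∧ Even n ∧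
      ∃ A : Finset Pt, A.card = n ∧ GenPos ↑A ∧ AlphaDense (Real.sqrt 2 + ε) A ∧
        (∃ C : Finset (Sym2 Pt), ↑C ⊆ edges ↑A ∧ C.card = n / 2 ∧
          ∀ e ∈ C, ∀ f ∈ C, e ≠ f → Cross e f) ∧
        (∀ (m : ℕ) (F : Fin m → Set (Sym2 Pt)),
          IsPartitionInto ↑A m F → (∀ i, PlaneEdges (F i)) → n / 2 ≤ m) := by
  obtain ⟨A, hcard, hneg, h0, hgp, hdense⟩ := exists_dense_genPos_neg_mem hε N
  obtain ⟨C, hCA, hCcard, hC⟩ := exists_pairwise_cross_of_neg_mem A hneg h0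
  refine ⟨4 * N ^ 2, ?_, ⟨2 * N ^ 2, by ring⟩, A, hcard, hgp, hdense,
    ⟨C, hCA, hcard ▸ hCcard, hC⟩, fun m F hF hplane => ?_⟩
  · nlinarith
  · rw [← hcard, ← hCcard]
    exact card_le_of_edges_subset_iUnion hF.1.ge hplane hCA hC
end
end

section
/- Let a₁ ∈ [0, 1/5] × [0, 1/5], a₂ ∈ [4/5, 1] × [0, 1/5], a₃ ∈ [2/5, 3/5] × [4/5, 1], and a₄ ∈ [2/5, 3/5] × [1/5, 2/5] be points of the plane. Then a₄ lies in the convex hull of {a₁, a₂, a₃}. -/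
/-!
By Cramer's rule, the signed areas `cross (b - p) (c - p)`, `cross (c - p) (a - p)`,
`cross (a - p) (b - p)` of the triangles `pbc`, `pca`, `pab` are (unnormalised) barycentric
coordinates of `p` with respect to `abc`, so `p` lies in the triangle as soon as they are all
nonnegative and their sum, the area of `abc`, is positive. For the four boxes each of these
areas is a product of two coordinate gaps that the boxes keep apart, minus a product of gaps
that the boxes keep small, and the estimates reduce to interval arithmetic.
-/

noncomputable section

theorem mem_convexHull_triple_of_smul_eq {R E : Type*} [Field R] [LinearOrder R]
    [IsStrictOrderedRing R] [AddCommGroup E] [Module R E] {a b c p : E} {μa μb μc : R}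
    (ha : 0 ≤ μa) (hb : 0 ≤ μb) (hc : 0 ≤ μc) (hsum : 0 < μa + μb + μc)
    (h : μa • a + μb • b + μc • c = (μa + μb + μc) • p) :
    p ∈ convexHull R {a, b, c} := by
  have hcenter : Finset.univ.centerMass ![μa, μb, μc] ![a, b, c] = p := by
    simp only [Finset.centerMass, Fin.sum_univ_three, Matrix.cons_val_zero, Matrix.cons_val_one,
      Matrix.cons_val_two, Matrix.head_cons, Matrix.tail_cons, h, smul_smul,
      inv_mul_cancel₀ hsum.ne', one_smul]
  rw [← hcenter]
  refine Finset.centerMass_mem_convexHull _ (fun i _ => ?_) (by simpa [Fin.sum_univ_three]) ?_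
  · fin_cases i <;> assumption
  · intro i _
    fin_cases i <;> simp

def cross (u v : Pt) : ℝ := u 0 * v 1 - u 1 * v 0

theorem cross_add_cross_add_cross (a b c p : Pt) :
    cross (b - p) (c - p) + cross (c - p) (a - p) + cross (a - p) (b - p) =
      cross (b - a) (c - a) := by
  simp only [cross, PiLp.sub_apply]
  ring

theorem cross_smul_add_cross_smul_add_cross_smul (a b c p : Pt) :
    cross (b - p) (c - p) • a + cross (c - p) (a - p) • b + cross (a - p) (b - p) • c =
      cross (b - a) (c - a) • p := by
  ext i
  fin_cases i <;>
    simp only [cross, PiLp.add_apply, PiLp.smul_apply, PiLp.sub_apply, smul_eq_mul, Fin.zero_eta,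
      Fin.mk_one] <;>
    ring

theorem mem_convexHull_of_cross_nonneg {a b c p : Pt} (ha : 0 ≤ cross (b - p) (c - p))
    (hb : 0 ≤ cross (c - p) (a - p)) (hc : 0 ≤ cross (a - p) (b - p))
    (habc : 0 < cross (b - a) (c - a)) : p ∈ convexHull ℝ {a, b, c} := by
  rw [← cross_add_cross_add_cross a b c p] at habc
  refine mem_convexHull_triple_of_smul_eq ha hb hc habc ?_
  rw [cross_smul_add_cross_smul_add_cross_smul, cross_add_cross_add_cross]

/-- If `a₁ ∈ [0,1/5] × [0,1/5]`, `a₂ ∈ [4/5,1] × [0,1/5]`, `a₃ ∈ [2/5,3/5] × [4/5,1]`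
and `a₄ ∈ [2/5,3/5] × [1/5,2/5]`, then `a₄` lies in the convex hull of
`{a₁, a₂, a₃}`. -/
theorem point_in_triangle (a₁ a₂ a₃ a₄ : Pt)
    (h₁ : a₁ 0 ∈ Set.Icc (0 : ℝ) (1 / 5) ∧ a₁ 1 ∈ Set.Icc (0 : ℝ) (1 / 5))
    (h₂ : a₂ 0 ∈ Set.Icc (4 / 5 : ℝ) 1 ∧ a₂ 1 ∈ Set.Icc (0 : ℝ) (1 / 5))
    (h₃ : a₃ 0 ∈ Set.Icc (2 / 5 : ℝ) (3 / 5) ∧ a₃ 1 ∈ Set.Icc (4 / 5 : ℝ) 1)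
    (h₄ : a₄ 0 ∈ Set.Icc (2 / 5 : ℝ) (3 / 5) ∧ a₄ 1 ∈ Set.Icc (1 / 5 : ℝ) (2 / 5)) :
    a₄ ∈ convexHull ℝ ({a₁, a₂, a₃} : Set Pt) := by
  obtain ⟨⟨x₁l, x₁u⟩, y₁l, y₁u⟩ := h₁
  obtain ⟨⟨x₂l, x₂u⟩, y₂l, y₂u⟩ := h₂
  obtain ⟨⟨x₃l, x₃u⟩, y₃l, y₃u⟩ := h₃
  obtain ⟨⟨x₄l, x₄u⟩, y₄l, y₄u⟩ := h₄
  apply mem_convexHull_of_cross_nonneg <;> simp only [cross, PiLp.sub_apply]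
  · nlinarith [mul_nonneg (by linarith : 0 ≤ a₂ 0 - a₄ 0) (by linarith : 0 ≤ a₃ 1 - a₄ 1)]
  · nlinarith [mul_nonneg (by linarith : 0 ≤ a₄ 0 - a₁ 0) (by linarith : 0 ≤ a₃ 1 - a₄ 1)]
  · nlinarith [mul_nonneg (by linarith : 0 ≤ a₄ 0 - a₁ 0) (by linarith : 0 ≤ a₄ 1 - a₂ 1),
      mul_nonneg (by linarith : 0 ≤ a₂ 0 - a₄ 0) (by linarith : 0 ≤ a₄ 1 - a₁ 1)]
  · nlinarith [mul_nonneg (by linarith : 0 ≤ a₂ 0 - a₁ 0 - 3 / 5)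
      (by linarith : 0 ≤ a₃ 1 - a₁ 1 - 3 / 5)]
end
end
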